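/- arXiv:2003.03483 — 3 statements merged into one kernel-verified Lean document; each statement's English description precedes it below -/
import Mathlib

section
/- For every natural number n ≥ 2, the maximum over α ∈ [0, π] of √n · cos^{n-1}(α/2) · sin(α/2) equals √n · ((n-1)/n)^{(n-1)/2} · (1/n)^{1/2} = (1 - 1/n)^{(n-1)/2}, attained at α = 2·arccos(√(1 - 1/n)). -/
open Real

lemma key_amgm (n : ℕ) (hn : 2 ≤ n) {x : ℝ} (hx0 : 0 ≤ x) (hx1 : x ≤ 1) :
    (n : ℝ) * (x ^ (n - 1) * (1 - x)) ≤ (1 - 1 / (n : ℝ)) ^ (n - 1) := by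
  have hN : (2 : ℝ) ≤ (n : ℝ) := by exact_mod_cast hn
  set N : ℝ := (n : ℝ) with hNdef
  have hN0 : 0 < N := by linarith
  have hN1 : 0 < N - 1 := by linarith
  set p₁ : ℝ := x * N / (N - 1) with hp1def
  set p₂ : ℝ := N * (1 - x) with hp2def
  have hp₁ : 0 ≤ p₁ := by positivity
  have hp₂ : 0 ≤ p₂ := by
    have : 0 ≤ 1 - x := by linarith
    positivity
  have hw₁ : (0:ℝ) ≤ (N - 1) / N := by positivity
  have hw₂ : (0:ℝ) ≤ 1 / N := by positivity
  have hsum : (N - 1) / N + 1 / N = 1 := by field_simp; ring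
  have h := Real.geom_mean_le_arith_mean2_weighted hw₁ hw₂ hp₁ hp₂ hsum
  have hrhs : (N - 1) / N * p₁ + 1 / N * p₂ = 1 := by
    rw [hp1def, hp2def]; field_simp; ring
  rw [hrhs] at h
  have h2 : (p₁ ^ ((N - 1) / N) * p₂ ^ (1 / N)) ^ N ≤ 1 ^ N :=
    Real.rpow_le_rpow (by positivity) h (le_of_lt hN0)
  rw [Real.one_rpow, Real.mul_rpow (by positivity) (by positivity),
    ← Real.rpow_mul hp₁, ← Real.rpow_mul hp₂,
    div_mul_cancel₀ _ (ne_of_gt hN0), div_mul_cancel₀ _ (ne_of_gt hN0),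
    Real.rpow_one] at h2
  have hcast : ((n - 1 : ℕ) : ℝ) = N - 1 := by
    rw [hNdef]; push_cast [Nat.cast_sub (by omega : 1 ≤ n)]; ring
  rw [← hcast, Real.rpow_natCast] at h2
  have hfact : (1 - 1 / N) ^ (n - 1) = ((N - 1) / N) ^ (n - 1) := by
    congr 1; field_simp
  rw [hfact]
  have hkey : N * (x ^ (n - 1) * (1 - x)) =
      p₁ ^ (n - 1) * p₂ * ((N - 1) / N) ^ (n - 1) := by
    rw [hp1def, hp2def, div_pow, mul_pow, div_pow]
    field_simp
  rw [hkey]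
  calc p₁ ^ (n - 1) * p₂ * ((N - 1) / N) ^ (n - 1)
      ≤ 1 * ((N - 1) / N) ^ (n - 1) := by
        apply mul_le_mul_of_nonneg_right h2 (by positivity)
    _ = ((N - 1) / N) ^ (n - 1) := one_mul _

lemma value_eq (n : ℕ) (hn : 2 ≤ n) :
    Real.sqrt n * Real.sqrt (1 - 1 / (n : ℝ)) ^ (n - 1) * Real.sqrt (1 / (n : ℝ))
      = (1 - 1 / (n : ℝ)) ^ (((n : ℝ) - 1) / 2) := by
  have hN : (2 : ℝ) ≤ (n : ℝ) := by exact_mod_cast hn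
  have hN0 : 0 < (n : ℝ) := by linarith
  have ha0 : 0 ≤ 1 - 1 / (n : ℝ) := by
    have : 1 / (n : ℝ) ≤ 1 := by
      rw [div_le_one hN0]; linarith
    linarith
  have hpow : Real.sqrt (1 - 1 / (n : ℝ)) ^ (n - 1)
      = (1 - 1 / (n : ℝ)) ^ (((n : ℝ) - 1) / 2) := by
    rw [Real.sqrt_eq_rpow, ← Real.rpow_natCast ((1 - 1 / (n:ℝ)) ^ ((1:ℝ)/2)) (n-1),
      ← Real.rpow_mul ha0]
    congr 1
    push_cast [Nat.cast_sub (by omega : 1 ≤ n)]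
    ring
  have hsq : Real.sqrt n * Real.sqrt (1 / (n : ℝ)) = 1 := by
    rw [← Real.sqrt_mul (le_of_lt hN0), mul_one_div_cancel (ne_of_gt hN0), Real.sqrt_one]
  calc Real.sqrt n * Real.sqrt (1 - 1 / (n : ℝ)) ^ (n - 1) * Real.sqrt (1 / (n : ℝ))
      = (Real.sqrt n * Real.sqrt (1 / (n : ℝ))) * Real.sqrt (1 - 1 / (n : ℝ)) ^ (n - 1) := by
        ring
    _ = (1 - 1 / (n : ℝ)) ^ (((n : ℝ) - 1) / 2) := by rw [hsq, one_mul, hpow]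

theorem B_W_max (n : ℕ) (hn : 2 ≤ n) :
    IsGreatest
      ((fun α : ℝ => Real.sqrt n * Real.cos (α / 2) ^ (n - 1) * Real.sin (α / 2)) ''
        Set.Icc 0 π)
      ((1 - 1 / (n : ℝ)) ^ (((n : ℝ) - 1) / 2)) ∧
    Real.sqrt n * (((n : ℝ) - 1) / n) ^ (((n : ℝ) - 1) / 2) * (1 / (n : ℝ)) ^ ((1 : ℝ) / 2)
      = (1 - 1 / (n : ℝ)) ^ (((n : ℝ) - 1) / 2) ∧
    Real.sqrt n *
        Real.cos ((2 * Real.arccos (Real.sqrt (1 - 1 / (n : ℝ)))) / 2) ^ (n - 1) *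
        Real.sin ((2 * Real.arccos (Real.sqrt (1 - 1 / (n : ℝ)))) / 2)
      = (1 - 1 / (n : ℝ)) ^ (((n : ℝ) - 1) / 2) := by
  have hN : (2 : ℝ) ≤ (n : ℝ) := by exact_mod_cast hn
  have hN0 : 0 < (n : ℝ) := by linarith
  have ha0 : 0 ≤ 1 - 1 / (n : ℝ) := by
    have : 1 / (n : ℝ) ≤ 1 := by
      rw [div_le_one hN0]; linarith
    linarith
  have ha1 : 1 - 1 / (n : ℝ) ≤ 1 := by
    have : 0 < 1 / (n : ℝ) := by positivity
    linarith
  -- Part 3 first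
  have hc1 : Real.sqrt (1 - 1 / (n : ℝ)) ≤ 1 := Real.sqrt_le_one.2 ha1
  have hc0 : 0 ≤ Real.sqrt (1 - 1 / (n : ℝ)) := Real.sqrt_nonneg _
  have hcos : Real.cos ((2 * Real.arccos (Real.sqrt (1 - 1 / (n : ℝ)))) / 2)
      = Real.sqrt (1 - 1 / (n : ℝ)) := by
    rw [mul_div_cancel_left₀ _ (two_ne_zero), Real.cos_arccos (by linarith) hc1]
  have hsin : Real.sin ((2 * Real.arccos (Real.sqrt (1 - 1 / (n : ℝ)))) / 2)
      = Real.sqrt (1 / (n : ℝ)) := by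
    rw [mul_div_cancel_left₀ _ (two_ne_zero), Real.sin_arccos,
      Real.sq_sqrt ha0]
    congr 1; ring
  have hpart3 : Real.sqrt n *
        Real.cos ((2 * Real.arccos (Real.sqrt (1 - 1 / (n : ℝ)))) / 2) ^ (n - 1) *
        Real.sin ((2 * Real.arccos (Real.sqrt (1 - 1 / (n : ℝ)))) / 2)
      = (1 - 1 / (n : ℝ)) ^ (((n : ℝ) - 1) / 2) := by
    rw [hcos, hsin, value_eq n hn]
  refine ⟨⟨⟨2 * Real.arccos (Real.sqrt (1 - 1 / (n : ℝ))), ?_, hpart3⟩, ?_⟩, ?_, hpart3⟩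
  · -- membership in Icc 0 π
    constructor
    · have := Real.arccos_nonneg (Real.sqrt (1 - 1 / (n : ℝ)))
      linarith
    · have h := Real.arccos_le_pi_div_two.mpr hc0
      linarith
  · -- upper bound
    rintro y ⟨α, ⟨hα0, hαπ⟩, rfl⟩
    simp only
    set t := α / 2 with ht
    have ht0 : 0 ≤ t := by positivity
    have htpi : t ≤ π / 2 := by rw [ht]; linarith
    have hcosnn : 0 ≤ Real.cos t :=
      Real.cos_nonneg_of_mem_Icc ⟨by linarith [Real.pi_pos], htpi⟩
    have hsinnn : 0 ≤ Real.sin t :=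
      Real.sin_nonneg_of_nonneg_of_le_pi ht0 (by linarith [Real.pi_pos])
    set f := Real.sqrt n * Real.cos t ^ (n - 1) * Real.sin t with hf
    have hfnn : 0 ≤ f := by positivity
    set T := (1 - 1 / (n : ℝ)) ^ (((n : ℝ) - 1) / 2) with hT
    have hTnn : 0 ≤ T := Real.rpow_nonneg ha0 _
    have hx0 : 0 ≤ Real.cos t ^ 2 := sq_nonneg _
    have hx1 : Real.cos t ^ 2 ≤ 1 := Real.cos_sq_le_one t
    have hkey := key_amgm n hn hx0 hx1
    have hf2 : f ^ 2 = (n : ℝ) * ((Real.cos t ^ 2) ^ (n - 1) * (1 - Real.cos t ^ 2)) := by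
      rw [hf]
      rw [mul_pow, mul_pow, Real.sq_sqrt (le_of_lt hN0), Real.sin_sq, ← pow_mul, ← pow_mul]
      ring_nf
    have hT2 : T ^ 2 = (1 - 1 / (n : ℝ)) ^ (n - 1) := by
      rw [hT, ← Real.rpow_natCast ((1 - 1 / (n:ℝ)) ^ (((n:ℝ)-1)/2)) 2,
        ← Real.rpow_mul ha0, ← Real.rpow_natCast (1 - 1 / (n:ℝ)) (n-1)]
      congr 1
      push_cast [Nat.cast_sub (by omega : 1 ≤ n)]
      ring
    have hsq : f ^ 2 ≤ T ^ 2 := by rw [hf2, hT2]; exact hkey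
    have := Real.sqrt_le_sqrt hsq
    rwa [Real.sqrt_sq hfnn, Real.sqrt_sq hTnn] at this
  · -- part 2
    have h1 : (((n : ℝ) - 1) / n) = 1 - 1 / (n : ℝ) := by field_simp
    have h2 : (1 / (n : ℝ)) ^ ((1 : ℝ) / 2) = Real.sqrt (1 / (n : ℝ)) := by
      rw [Real.sqrt_eq_rpow]
    have h3 : (1 - 1 / (n : ℝ)) ^ (((n : ℝ) - 1) / 2)
        = Real.sqrt (1 - 1 / (n : ℝ)) ^ (n - 1) := by
      rw [Real.sqrt_eq_rpow, ← Real.rpow_natCast ((1 - 1 / (n:ℝ)) ^ ((1:ℝ)/2)) (n-1),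
        ← Real.rpow_mul ha0]
      congr 1
      push_cast [Nat.cast_sub (by omega : 1 ≤ n)]
      ring
    rw [h1, h2, h3, value_eq n hn]
    exact h3
end

section
/- Let |ψ_k⟩ = cos θ_k |S₀⟩ + sin θ_k |S₁⟩ with |S₀⟩, |S₁⟩ the uniform superpositions of unmarked and marked states, and |φ⟩ = (cos(α/2)|0⟩ + sin(α/2)|1⟩)^{⊗n}. Then ⟨ψ_k|φ⟩ = (cos θ_k/√(N−M))·[(cos(α/2)+sin(α/2))^n − Σ_{i=1}^M cos^{n−n_i}(α/2) sin^{n_i}(α/2)] + (sin θ_k/√M)·Σ_{i=1}^M cos^{n−n_i}(α/2) sin^{n_i}(α/2), where n_1,...,n_M are the Hamming weights of the marked states. -/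
open Real

lemma prod_ite_weight (n : ℕ) (c s : ℝ) (x : Fin n → Bool) :
    (∏ i : Fin n, (if x i then s else c))
      = c ^ (n - (Finset.univ.filter fun i => x i).card) *
          s ^ (Finset.univ.filter fun i => x i).card := by
  rw [Finset.prod_ite, Finset.prod_const, Finset.prod_const, mul_comm]
  congr 2
  have := Finset.card_filter_add_card_filter_not (s := (Finset.univ : Finset (Fin n)))
    (p := fun i => x i = true)
  simp only [Finset.card_univ, Fintype.card_fin] at this
  omega

lemma sum_prod_ite (n : ℕ) (c s : ℝ) :
    (∑ x : Fin n → Bool, ∏ i : Fin n, (if x i then s else c)) = (c + s) ^ n := by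
  rw [← Fintype.prod_sum (fun (_ : Fin n) (b : Bool) => if b then s else c)]
  simp [add_comm]

/-- Exact overlap formula (Eq. (6)) between the Grover intermediate state and a
symmetric real product state. -/
theorem grover_overlap_formula (n : ℕ) (S : Finset (Fin n → Bool))
    (hM : 0 < S.card) (hMN : S.card < 2 ^ n)
    (α θk : ℝ)
    (S₀ S₁ ψk φ : (Fin n → Bool) → ℝ)
    (hS₀ : ∀ x, S₀ x = if x ∉ S then 1 / Real.sqrt ((2 ^ n : ℝ) - S.card) else 0)
    (hS₁ : ∀ x, S₁ x = if x ∈ S then 1 / Real.sqrt S.card else 0)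
    (hψk : ∀ x, ψk x = Real.cos θk * S₀ x + Real.sin θk * S₁ x)
    (hφ : ∀ x, φ x = ∏ s : Fin n,
      (if x s then Real.sin (α / 2) else Real.cos (α / 2))) :
    ∑ x : Fin n → Bool, ψk x * φ x
      = (Real.cos θk / Real.sqrt ((2 ^ n : ℝ) - S.card)) *
          ((Real.cos (α / 2) + Real.sin (α / 2)) ^ n
            - ∑ x ∈ S,
                Real.cos (α / 2) ^ (n - (Finset.univ.filter fun s => x s).card) *
                  Real.sin (α / 2) ^ (Finset.univ.filter fun s => x s).card)
        + (Real.sin θk / Real.sqrt S.card) *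
            ∑ x ∈ S,
              Real.cos (α / 2) ^ (n - (Finset.univ.filter fun s => x s).card) *
                Real.sin (α / 2) ^ (Finset.univ.filter fun s => x s).card := by
  set c := Real.cos (α / 2)
  set s := Real.sin (α / 2)
  have hφ' : ∀ x : Fin n → Bool,
      φ x = c ^ (n - (Finset.univ.filter fun i => x i).card) *
        s ^ (Finset.univ.filter fun i => x i).card := by
    intro x; rw [hφ x]; exact prod_ite_weight n c s x
  have key : ∀ x : Fin n → Bool, ψk x * φ x
      = (Real.cos θk / Real.sqrt ((2 ^ n : ℝ) - S.card)) *
          (if x ∉ S then φ x else 0)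
        + (Real.sin θk / Real.sqrt S.card) * (if x ∈ S then φ x else 0) := by
    intro x
    rw [hψk x, hS₀ x, hS₁ x]
    by_cases hx : x ∈ S
    · simp only [hx, not_true_eq_false, if_true, if_false]
      ring
    · simp only [hx, not_false_eq_true, if_true, if_false]
      ring
  rw [Finset.sum_congr rfl (fun x _ => key x), Finset.sum_add_distrib,
    ← Finset.mul_sum, ← Finset.mul_sum]
  congr 1
  · congr 1
    rw [Finset.sum_ite, Finset.sum_const_zero, add_zero]
    have hsplit : ∑ x : Fin n → Bool, φ x
        = (∑ x ∈ Finset.univ.filter (· ∈ S), φ x)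
          + ∑ x ∈ Finset.univ.filter (· ∉ S), φ x := by
      rw [← Finset.sum_filter_add_sum_filter_not Finset.univ (· ∈ S)]
    have htot : ∑ x : Fin n → Bool, φ x = (c + s) ^ n := by
      rw [Finset.sum_congr rfl (fun x _ => hφ x)]
      exact sum_prod_ite n c s
    have hin : ∑ x ∈ Finset.univ.filter (· ∈ S), φ x
        = ∑ x ∈ S, c ^ (n - (Finset.univ.filter fun i => x i).card) *
            s ^ (Finset.univ.filter fun i => x i).card := by
      rw [Finset.filter_univ_mem]
      exact Finset.sum_congr rfl fun x _ => hφ' x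
    rw [htot] at hsplit
    rw [hin] at hsplit
    linarith [hsplit]
  · congr 1
    rw [Finset.sum_ite, Finset.sum_const_zero, add_zero, Finset.filter_univ_mem]
    exact Finset.sum_congr rfl fun x _ => hφ' x
end

section
/- For n ≥ 2 and 1 ≤ m ≤ n/2, the function m ↦ ((n−m)/n)^{(n−m)/2}·(m/n)^{m/2} is strictly decreasing in m on {0, 1, ..., ⌊n/2⌋}, with value 1 at m = 0 and value 2^{−n/2} at m = n/2 (when n is even). -/
open Real

private lemma g_anti (n : ℝ) (hn : 2 ≤ n) :
    StrictAntiOn (fun x : ℝ => (n - x)/2 * Real.log ((n - x)/n) + x/2 * Real.log (x/n))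
      (Set.Icc 1 (n/2)) := by
  have hn0 : (0:ℝ) < n := by linarith
  apply strictAntiOn_of_deriv_neg (convex_Icc _ _)
  · apply ContinuousOn.add
    · apply ContinuousOn.mul (by fun_prop)
      apply ContinuousOn.log (by fun_prop)
      intro x hx
      simp only [Set.mem_Icc] at hx
      have : 0 < n - x := by linarith [hx.2]
      positivity
    · apply ContinuousOn.mul (by fun_prop)
      apply ContinuousOn.log (by fun_prop)
      intro x hx
      simp only [Set.mem_Icc] at hx
      have : (0:ℝ) < x := by linarith [hx.1]
      positivity
  · intro x hx
    rw [interior_Icc] at hx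
    obtain ⟨hx1, hx2⟩ := hx
    have hx0 : 0 < x := by linarith
    have hnx : 0 < n - x := by linarith
    have h1 : HasDerivAt (fun x : ℝ => (n - x)/2 * Real.log ((n - x)/n))
        ((-1/2) * Real.log ((n - x)/n) + (n - x)/2 * (-(1/(n - x)))) x := by
      have hu : HasDerivAt (fun x : ℝ => (n - x)/n) (-1/n) x := by
        simpa using (((hasDerivAt_id x).const_sub n).div_const n)
      have hlog : HasDerivAt (fun x : ℝ => Real.log ((n - x)/n))
          ((-1/n)/((n - x)/n)) x := hu.log (by positivity)
      have hc : HasDerivAt (fun x : ℝ => (n - x)/2) (-1/2) x := by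
        simpa using (((hasDerivAt_id x).const_sub n).div_const 2)
      have := hc.fun_mul hlog
      refine this.congr_deriv ?_
      rw [div_div_div_cancel_right₀ hn0.ne']; ring
    have h2 : HasDerivAt (fun x : ℝ => x/2 * Real.log (x/n))
        ((1/2) * Real.log (x/n) + x/2 * (1/x)) x := by
      have hu : HasDerivAt (fun x : ℝ => x/n) (1/n) x := by
        simpa using ((hasDerivAt_id x).div_const n)
      have hlog : HasDerivAt (fun x : ℝ => Real.log (x/n)) ((1/n)/(x/n)) x :=
        hu.log (by positivity)
      have hc : HasDerivAt (fun x : ℝ => x/2) (1/2) x := by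
        simpa using ((hasDerivAt_id x).div_const 2)
      have := hc.fun_mul hlog
      refine this.congr_deriv ?_
      rw [div_div_div_cancel_right₀ hn0.ne']
    have := (h1.fun_add h2)
    rw [this.deriv]
    have hlt : Real.log (x/n) < Real.log ((n - x)/n) := by
      apply Real.log_lt_log (by positivity)
      gcongr
      linarith
    have e1 : (n - x)/2 * (-(1/(n - x))) = -(1/2) := by field_simp
    have e2 : x/2 * (1/x) = 1/2 := by field_simp
    linarith

theorem D_max_decreasing (n : ℕ) (hn : 2 ≤ n) :
    (∀ m₁ m₂ : ℕ, m₁ < m₂ → 2 * m₂ ≤ n →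
      (((n : ℝ) - m₂) / n) ^ (((n : ℝ) - m₂) / 2) * ((m₂ : ℝ) / n) ^ ((m₂ : ℝ) / 2)
        < (((n : ℝ) - m₁) / n) ^ (((n : ℝ) - m₁) / 2) * ((m₁ : ℝ) / n) ^ ((m₁ : ℝ) / 2)) ∧
    (((n : ℝ) - (0 : ℕ)) / n) ^ (((n : ℝ) - (0 : ℕ)) / 2) *
        (((0 : ℕ) : ℝ) / n) ^ (((0 : ℕ) : ℝ) / 2) = 1 ∧
    (Even n →
      (((n : ℝ) - (n / 2 : ℕ)) / n) ^ (((n : ℝ) - (n / 2 : ℕ)) / 2) *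
          (((n / 2 : ℕ) : ℝ) / n) ^ (((n / 2 : ℕ) : ℝ) / 2)
        = (2 : ℝ) ^ (-(n : ℝ) / 2)) := by
  have hn0 : (0:ℝ) < n := by positivity
  have hnne : (n:ℝ) ≠ 0 := hn0.ne'
  have hval0 : (((n : ℝ) - (0 : ℕ)) / n) ^ (((n : ℝ) - (0 : ℕ)) / 2) *
      (((0 : ℕ) : ℝ) / n) ^ (((0 : ℕ) : ℝ) / 2) = 1 := by
    simp [div_self hnne, Real.one_rpow, Real.rpow_zero]
  have key : ∀ m : ℕ, 1 ≤ m → 2 * m ≤ n →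
      (((n : ℝ) - m) / n) ^ (((n : ℝ) - m) / 2) * ((m : ℝ) / n) ^ ((m : ℝ) / 2)
      = Real.exp ((( (n:ℝ) - m)/2) * Real.log (((n:ℝ) - m)/n) + ((m:ℝ)/2) * Real.log ((m:ℝ)/n)) := by
    intro m hm1 hm2
    have hm1' : (1:ℝ) ≤ (m:ℝ) := by exact_mod_cast hm1
    have hm2' : 2 * (m:ℝ) ≤ (n:ℝ) := by exact_mod_cast hm2
    have hb1 : (0:ℝ) < ((n:ℝ) - m)/n := by
      have : (0:ℝ) < (n:ℝ) - m := by linarith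
      positivity
    have hb2 : (0:ℝ) < (m:ℝ)/n := by
      have : (0:ℝ) < (m:ℝ) := by linarith
      positivity
    rw [Real.rpow_def_of_pos hb1, Real.rpow_def_of_pos hb2, ← Real.exp_add]
    ring_nf
  refine ⟨?_, hval0, ?_⟩
  · intro m₁ m₂ h12 h2n
    have hm2' : 2 * (m₂:ℝ) ≤ (n:ℝ) := by exact_mod_cast h2n
    have hm21 : 1 ≤ m₂ := by omega
    rcases Nat.eq_zero_or_pos m₁ with h0 | hpos
    · subst h0
      rw [hval0, key m₂ hm21 h2n]
      rw [Real.exp_lt_one_iff]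
      have hlog1 : Real.log (((n:ℝ) - m₂)/n) ≤ 0 := by
        apply Real.log_nonpos (div_nonneg (by linarith) hn0.le)
        rw [div_le_one hn0]
        have : (0:ℝ) ≤ (m₂:ℝ) := by positivity
        linarith
      have hlog2 : Real.log ((m₂:ℝ)/n) < 0 := by
        apply Real.log_neg
        · have : (1:ℝ) ≤ (m₂:ℝ) := by exact_mod_cast hm21
          positivity
        · rw [div_lt_one hn0]
          have : (1:ℝ) ≤ (m₂:ℝ) := by exact_mod_cast hm21
          linarith
      have h1 : (0:ℝ) ≤ ((n:ℝ) - m₂)/2 := by linarith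
      have h2 : (0:ℝ) < (m₂:ℝ)/2 := by
        have : (1:ℝ) ≤ (m₂:ℝ) := by exact_mod_cast hm21
        linarith
      have := mul_nonpos_of_nonneg_of_nonpos h1 hlog1
      nlinarith
    · rw [key m₁ hpos (by omega), key m₂ hm21 h2n, Real.exp_lt_exp]
      have ha := g_anti (n:ℝ) (by exact_mod_cast hn)
      have hx1 : ((m₁:ℝ)) ∈ Set.Icc (1:ℝ) ((n:ℝ)/2) := by
        constructor
        · exact_mod_cast hpos
        · have : 2 * (m₁:ℝ) ≤ (n:ℝ) := by
            have : 2 * m₁ ≤ n := by omega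
            exact_mod_cast this
          linarith
      have hx2 : ((m₂:ℝ)) ∈ Set.Icc (1:ℝ) ((n:ℝ)/2) := by
        constructor
        · exact_mod_cast hm21
        · linarith
      have hlt : (m₁:ℝ) < (m₂:ℝ) := by exact_mod_cast h12
      exact ha hx1 hx2 hlt
  · intro hev
    obtain ⟨k, hk⟩ := hev
    have hk2 : n / 2 = k := by omega
    have hkc : ((n/2 : ℕ) : ℝ) = (n:ℝ)/2 := by
      rw [hk2]; rw [hk]; push_cast; ring
    rw [hkc]
    have h1 : (n:ℝ) - (n:ℝ)/2 = (n:ℝ)/2 := by ring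
    rw [h1]
    have h2 : ((n:ℝ)/2)/(n:ℝ) = 1/2 := by field_simp
    rw [h2]
    rw [← Real.rpow_add (by norm_num : (0:ℝ) < 1/2)]
    have h3 : (n:ℝ)/2/2 + (n:ℝ)/2/2 = (n:ℝ)/2 := by ring
    rw [h3]
    rw [show (1:ℝ)/2 = 2⁻¹ by norm_num, Real.inv_rpow (by norm_num), ← Real.rpow_neg (by norm_num)]
    ring_nf
end
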